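/- arXiv:1710.06891 — 3 statements merged into one kernel-verified Lean document; each statement's English description precedes it below -/
import Mathlib

section
/- Let Y_1, Y_2 be discrete random variables, R ∈ {0,1} a missingness indicator, and φ a parameter with prior density p(φ), where the likelihood of R given (Y_1, Y_2, φ) factors so that p(R = r | Y_1 = y_1, Y_2 = y_2, φ) = g(r, y_2, φ) does not depend on y_1, and the distribution of (Y_1, Y_2) given θ is independent of φ (θ and φ distinct, with independent priors). Then the posterior-predictive conditional distribution satisfies p(Y_1 = y_1 | Y_2 = y_2, R = r, θ) = p(Y_1 = y_1 | Y_2 = y_2, θ). -/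
open Finset

/-- Corollary 2 of Bojinov–Pillai–Rubin, in a discrete setting.  The data model
`q a b = p(Y₁ = a, Y₂ = b | θ)` (for the fixed parameter value `θ`) is free of `φ`,
the missingness mechanism `g r b φ = p(R = r | Y₁ = a, Y₂ = b, φ)` is free of `y₁`,
and `φ` has prior `w` independent of the prior of `θ`.  The joint model is
`j a b r = q a b * ∑ φ, w φ * g r b φ`.  Then
`p(Y₁ = a | Y₂ = b, R = r, θ) = p(Y₁ = a | Y₂ = b, θ)`. -/
theorem stmt_4 {A B Φ : Type*} [Fintype A] [Fintype B] [Fintype Φ]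
    (q : A → B → ℝ) (g : Bool → B → Φ → ℝ) (w : Φ → ℝ)
    (hq : ∀ a b, 0 ≤ q a b) (hqsum : ∑ a : A, ∑ b : B, q a b = 1)
    (hg : ∀ r b φ, 0 ≤ g r b φ) (hgsum : ∀ b φ, g true b φ + g false b φ = 1)
    (hw : ∀ φ, 0 ≤ w φ) (hwsum : ∑ φ : Φ, w φ = 1)
    (j : A → B → Bool → ℝ)
    (hj : ∀ a b r, j a b r = q a b * ∑ φ : Φ, w φ * g r b φ) :
    ∀ a b r, 0 < ∑ a' : A, j a' b r →
      j a b r / (∑ a' : A, j a' b r)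
        = (∑ r' : Bool, j a b r') / (∑ a' : A, ∑ r' : Bool, j a' b r') := by
  intro a b r hpos
  set S : ℝ := ∑ φ : Φ, w φ * g r b φ with hS
  have hsum1 : ∑ a' : A, j a' b r = (∑ a' : A, q a' b) * S := by
    simp only [hj, ← Finset.sum_mul]
    rfl
  have hSpos : 0 < S := by
    rcases lt_or_ge 0 S with h | h
    · exact h
    · exfalso
      have hS0 : S = 0 :=
        le_antisymm h (Finset.sum_nonneg fun φ _ => mul_nonneg (hw φ) (hg r b φ))
      rw [hsum1, hS0, mul_zero] at hpos
      exact lt_irrefl 0 hpos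
  have hQpos : 0 < ∑ a' : A, q a' b := by
    by_contra h
    have hQ0 : (∑ a' : A, q a' b) = 0 :=
      le_antisymm (le_of_not_gt h) (Finset.sum_nonneg fun a' _ => hq a' b)
    rw [hsum1, hQ0, zero_mul] at hpos
    exact lt_irrefl 0 hpos
  have hrow : ∀ a', ∑ r' : Bool, j a' b r' = q a' b := by
    intro a'
    have : ∑ r' : Bool, j a' b r' =
        q a' b * ∑ φ : Φ, w φ * (g true b φ + g false b φ) := by
      rw [Fintype.sum_bool, hj, hj, ← mul_add, ← Finset.sum_add_distrib]
      simp only [mul_add]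
    simp only [this, hgsum, mul_one, hwsum]
  have hrhs : (∑ a' : A, ∑ r' : Bool, j a' b r') = ∑ a' : A, q a' b := by
    simp only [hrow]
  rw [hj, hsum1, hrow, hrhs, ← hS, mul_div_mul_right _ _ (ne_of_gt hSpos)]
end

section
/- Suppose for each column j ∈ {1,…,J*} the following holds: if the probability that variable j is missing is positive for some φ and this probability depends on component k of Y_i (i.e., p(R_{i,j} = 0 | Y_i = y_i, φ) ≠ p(R_{i,j} = 0 | Y_{i,-k} = y_{i,-k}, φ) for some k), then column k is always observed (p(R_{i,k} = 0 | Y_i, φ) = 0 for all φ). Assume additionally that columns 1,…,J* each have positive probability of being missing and columns J*+1,…,J are always observed. Then for every j ≤ J*, the missingness probability of column j depends only on the fully observed columns: p(R_{i,j} = 0 | Y_i = y_i, φ) = p(R_{i,j} = 0 | Y_{i,J*+1:J} = y_{i,J*+1:J}, φ) for all i, j ≤ J*, and φ. -/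
/-- The missingness probability `f` of column `j` "depends on component `k`" of the row:
there exist a parameter and two rows agreeing everywhere off `k` on which `f` differs. -/
def DependsOnCoord {J : ℕ} {V : Fin J → Type*} {Φ : Type*}
    (f : (∀ j, V j) → Φ → ℝ) (k : Fin J) : Prop :=
  ∃ (φ : Φ) (y y' : ∀ j, V j), (∀ j, j ≠ k → y j = y' j) ∧ f y φ ≠ f y' φ

lemma aux_indep {J : ℕ} {V : Fin J → Type*} [∀ j, DecidableEq (V j)] {Φ : Type*}
    (f : (∀ j, V j) → Φ → ℝ) (S : Finset (Fin J))
    (h : ∀ k ∈ S, ¬ DependsOnCoord f k) :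
    ∀ (φ : Φ) (y y' : ∀ j, V j), (∀ j ∉ S, y j = y' j) → f y φ = f y' φ := by
  induction S using Finset.induction with
  | empty =>
    intro φ y y' hagree
    have : y = y' := funext fun j => hagree j (Finset.notMem_empty j)
    rw [this]
  | @insert k S hk ih =>
    intro φ y y' hagree
    have step : f y φ = f (Function.update y k (y' k)) φ := by
      by_contra hne
      exact h k (Finset.mem_insert_self k S)
        ⟨φ, y, Function.update y k (y' k),
          fun j hj => (Function.update_of_ne hj _ _).symm, hne⟩
    rw [step]
    apply ih (fun k' hk' => h k' (Finset.mem_insert_of_mem hk'))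
    intro j hj
    by_cases hjk : j = k
    · subst hjk; simp
    · rw [Function.update_of_ne hjk]
      exact hagree j (by simp [hjk, hj])

/-- Corollary 1.  Here `p j y φ = p(R_{i,j} = 0 | Y_i = y, φ)`.  The hypothesis `hthm`
is the conclusion of Theorem 1 of Mealli–Rubin: if column `j ≤ J*` has positive
probability of being missing for some `φ` and its missingness probability depends on
component `k`, then column `k` is always observed.  Columns `1, …, J*` each have positive
probability of being missing, and columns `J*+1, …, J` are always observed.  Then the
missingness probability of each column `j ≤ J*` depends only on the always-observed
coordinates `J*+1, …, J`. -/
theorem stmt_5 {J Js : ℕ} (hJs : Js ≤ J)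
    {V : Fin J → Type*} [∀ j, Fintype (V j)] [∀ j, Nonempty (V j)]
    {Φ : Type*} [Nonempty Φ] {N : ℕ}
    (p : Fin N → Fin J → (∀ j, V j) → Φ → ℝ)
    (hthm : ∀ (i : Fin N) (j k : Fin J), (j : ℕ) < Js →
      (∃ y φ, 0 < p i j y φ) → DependsOnCoord (p i j) k →
      ∀ (y : ∀ j', V j') (φ : Φ), p i k y φ = 0)
    (hmiss : ∀ (i : Fin N) (j : Fin J), (j : ℕ) < Js → ∃ y φ, 0 < p i j y φ)
    (hobs : ∀ (i : Fin N) (j : Fin J), Js ≤ (j : ℕ) →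
      ∀ (y : ∀ j', V j') (φ : Φ), p i j y φ = 0) :
    ∀ (i : Fin N) (j : Fin J), (j : ℕ) < Js →
      ∀ (φ : Φ) (y y' : ∀ j', V j'),
        (∀ k : Fin J, Js ≤ (k : ℕ) → y k = y' k) → p i j y φ = p i j y' φ := by
  intro i j hj φ y y' hagree
  classical
  apply aux_indep (p i j) (Finset.univ.filter fun k => (k : ℕ) < Js)
  · intro k hk hdep
    have hkJs : (k : ℕ) < Js := (Finset.mem_filter.mp hk).2
    obtain ⟨z, ψ, hz⟩ := hmiss i k hkJs
    have := hthm i j k hj (hmiss i j hj) hdep z ψ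
    linarith
  · intro k hk
    apply hagree
    simpa using hk
end

section
/- Suppose R = (R_1, R_2) with P(R_1 = r_1, R_2 = r_2 | Y = y) = f_1(r_1, y_{obs}) · f_2(r_2, r_1, y_1 r_1, y_{obs}) as in the MAAR2 mechanism of Table 1, where f_2 depends on y_1 only through the product y_1 r_1 (i.e., only when y_1 is observed). Then the mechanism is MAAR: P(R = r | Y = y) = P(R = r | Y = y') whenever S(r, y) = S(r, y'), even though the columns of R are not conditionally independent given Y. -/
/-- The MAAR2 mechanism of Table 1. Data `y = (y₁, y_obs)` with `y_obs : Yo` always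
observed; `P(R₁ = r₁, R₂ = r₂ | Y = y) = f₁ r₁ y_obs * f₂ r₂ r₁ (y₁·r₁) y_obs`, where
`f₂` involves `y₁` only through the product `y₁·r₁` (i.e. only when `y₁` is observed).
Such a mechanism is MAAR: `P(R = r | Y = y) = P(R = r | Y = y')` whenever
`S(r, y) = S(r, y')`, even though the columns of `R` are not conditionally
independent given `Y`. -/
theorem stmt_17 {Yo : Type*}
    (f₁ : Bool → Yo → ℝ) (f₂ : Bool → Bool → ℝ → Yo → ℝ)
    (hf₁ : ∀ yo, f₁ true yo + f₁ false yo = 1)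
    (hf₂ : ∀ r₁ t yo, f₂ true r₁ t yo + f₂ false r₁ t yo = 1)
    (P : Bool × Bool → ℝ × Yo → ℝ)
    (hP : ∀ r y, P r y = f₁ r.1 y.2 * f₂ r.2 r.1 (y.1 * (if r.1 then 1 else 0)) y.2) :
    ∀ (r : Bool × Bool) (y y' : ℝ × Yo),
      (y.2 = y'.2 ∧ (r.1 = true → y.1 = y'.1)) → P r y = P r y' := by
  rintro r y y' ⟨h2, h1⟩
  rw [hP, hP, h2]
  cases hr : r.1 with
  | false => simp [hr]
  | true => rw [h1 hr]
end
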